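/- Let ψ: 𝕋² → 𝕋² be a skew product over the irrational rotation r_α with unique invariant measure μ^ψ = (1/m) Σ_{j=1}^m (Id × γ_j)_* Leb, where ψ permutes the graphs of γ_1,…,γ_m fiberwise: ψ({(x,γ_1(x)),…,(x,γ_m(x))}) = {(x+α,γ_1(x+α)),…,(x+α,γ_m(x+α))} for Lebesgue-a.e. x. If f ∈ L²(μ^ψ) satisfies f ∘ ψ = λ f μ^ψ-a.e. with |f| = 1 a.e., then the function g(x) = ∏_{j=1}^m f(x, γ_j(x)) satisfies g(x + α) = λ^m g(x) for Lebesgue-a.e. x ∈ 𝕋¹; i.e., g is an eigenfunction of the rotation r_α with eigenvalue λ^m. -/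

import Mathlib

open MeasureTheory Finset
open scoped ENNReal

set_option maxHeartbeats 1000000 in
/-- Let `ψ` be a skew product over the irrational rotation `r_α` on `𝕋²`, with
unique invariant measure `μ^ψ = (1/m) Σ_j (Id × γ_j)_* Leb`, which permutes
the graphs of the `γ_j` fibrewise a.e.  If `f` is a unimodular eigenfunction
of `ψ` with eigenvalue `λ`, then `g(x) = ∏_j f(x, γ_j(x))` satisfies
`g(x + α) = λ^m g(x)` for Lebesgue-a.e. `x`, i.e. `g` is an eigenfunction of
`r_α` with eigenvalue `λ^m`. -/
theorem stmt_15 (m : ℕ) (hm : 1 ≤ m) (α : ℝ) (hα : Irrational α)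
    (ψ : (UnitAddCircle × UnitAddCircle) ≃ₜ (UnitAddCircle × UnitAddCircle))
    (γ : Fin m → UnitAddCircle → UnitAddCircle)
    (hγ : ∀ j, Measurable (γ j))
    (hskew : ∀ p : UnitAddCircle × UnitAddCircle,
      (ψ p).1 = p.1 + (α : UnitAddCircle))
    (μψ : Measure (UnitAddCircle × UnitAddCircle))
    (hμψ : μψ = (m : ℝ≥0∞)⁻¹ • ∑ j : Fin m,
      Measure.map (fun x => (x, γ j x)) volume)
    (hψinv : MeasurePreserving ⇑ψ μψ μψ)
    (huniq : ∀ ν : Measure (UnitAddCircle × UnitAddCircle),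
      IsProbabilityMeasure ν → MeasurePreserving ⇑ψ ν ν → ν = μψ)
    (hdisj : ∀ᵐ x : UnitAddCircle ∂volume, Function.Injective fun j => γ j x)
    (hperm : ∀ᵐ x : UnitAddCircle ∂volume,
      Set.range (fun j : Fin m => ψ (x, γ j x)) =
        Set.range (fun j : Fin m =>
          (x + (α : UnitAddCircle), γ j (x + (α : UnitAddCircle)))))
    (f : UnitAddCircle × UnitAddCircle → ℂ) (hf : Measurable f)
    (lam : ℂ)
    (heig : ∀ᵐ p ∂μψ, f (ψ p) = lam * f p)
    (hmod : ∀ᵐ p ∂μψ, ‖f p‖ = 1) :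
    ∀ᵐ x : UnitAddCircle ∂volume,
      (∏ j : Fin m, f (x + (α : UnitAddCircle), γ j (x + (α : UnitAddCircle)))) =
        lam ^ m * ∏ j : Fin m, f (x, γ j x) := by

  -- Each graph measure is absolutely continuous w.r.t. μψ
  have hac : ∀ j : Fin m, Measure.map (fun x => (x, γ j x)) volume ≪ μψ := by
    intro j
    rw [hμψ]
    refine Measure.AbsolutelyContinuous.mk fun s hs h0 => ?_
    rw [Measure.smul_apply, smul_eq_mul] at h0
    have hmne : (m : ℝ≥0∞)⁻¹ ≠ 0 :=
      ENNReal.inv_ne_zero.mpr (ENNReal.natCast_ne_top m)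
    have hsum : (∑ j : Fin m, Measure.map (fun x => (x, γ j x)) volume) s = 0 := by
      rcases mul_eq_zero.mp h0 with h | h
      · exact absurd h hmne
      · exact h
    rw [Measure.finset_sum_apply] at hsum
    exact (Finset.sum_eq_zero_iff.mp hsum) j (Finset.mem_univ j)
  -- transfer the eigen-equation to each graph
  have heig' : ∀ j : Fin m, ∀ᵐ x : UnitAddCircle ∂volume,
      f (ψ (x, γ j x)) = lam * f (x, γ j x) := by
    intro j
    have hmeasg : Measurable (fun x : UnitAddCircle => (x, γ j x)) :=
      measurable_id.prodMk (hγ j)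
    have h1 : ∀ᵐ p ∂(Measure.map (fun x => (x, γ j x)) volume),
        f (ψ p) = lam * f p := (hac j).ae_le heig
    have hset : MeasurableSet {p : UnitAddCircle × UnitAddCircle |
        f (ψ p) = lam * f p} :=
      measurableSet_eq_fun (hf.comp ψ.continuous.measurable) (measurable_const.mul hf)
    exact (MeasureTheory.ae_map_iff hmeasg.aemeasurable hset).mp h1
  have heigAll : ∀ᵐ x : UnitAddCircle ∂volume, ∀ j : Fin m,
      f (ψ (x, γ j x)) = lam * f (x, γ j x) := ae_all_iff.mpr heig'
  -- injectivity at shifted points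
  have hmp : MeasurePreserving (fun x : UnitAddCircle => x + (α : UnitAddCircle))
      volume volume := measurePreserving_add_right volume _
  have hdisj' : ∀ᵐ x : UnitAddCircle ∂volume,
      Function.Injective fun j => γ j (x + (α : UnitAddCircle)) :=
    hmp.quasiMeasurePreserving.ae (p := fun x => Function.Injective fun j => γ j x) hdisj
  filter_upwards [heigAll, hperm, hdisj, hdisj'] with x h1 h2 h3 h4
  set u : Fin m → UnitAddCircle × UnitAddCircle := fun j => ψ (x, γ j x) with hu
  set v : Fin m → UnitAddCircle × UnitAddCircle :=
    fun j => (x + (α : UnitAddCircle), γ j (x + (α : UnitAddCircle))) with hv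
  have hui : Function.Injective u := by
    intro i j hij
    have := ψ.injective hij
    exact h3 (congrArg Prod.snd this)
  have hvi : Function.Injective v := by
    intro i j hij
    exact h4 (congrArg Prod.snd hij)
  have himg : Finset.image u Finset.univ = Finset.image v Finset.univ := by
    apply Finset.coe_injective
    simpa [Set.image_univ] using h2
  calc (∏ j : Fin m, f (v j))
      = ∏ p ∈ Finset.image v Finset.univ, f p :=
        (Finset.prod_image fun i _ j _ h => hvi h).symm
    _ = ∏ p ∈ Finset.image u Finset.univ, f p := by rw [himg]
    _ = ∏ j : Fin m, f (u j) := Finset.prod_image fun i _ j _ h => hui h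
    _ = ∏ j : Fin m, lam * f (x, γ j x) := Finset.prod_congr rfl fun j _ => h1 j
    _ = lam ^ m * ∏ j : Fin m, f (x, γ j x) := by
        rw [Finset.prod_mul_distrib, Finset.prod_const, Finset.card_univ,
          Fintype.card_fin]
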